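/- For every positive integer d, a d×d matrix M over ℚ is torsion (i.e., M^p = M^q for some distinct naturals p, q) if and only if M annihilates the polynomial z^d · ∏_{j=1}^{2d²} γ_j(z), where γ_j is the j-th cyclotomic polynomial. -/

import Mathlib

/-!
If `M ^ p = M ^ q` with `p < q`, the minimal polynomial of `M` divides `X ^ p * (X ^ (q - p) - 1)`,
and has degree at most `d`. Its `X`-part therefore divides `X ^ d`, and its other part is a product
of distinct cyclotomic factors `Φ_j` of degree `φ j ≤ d`; since `j ≤ 2 φ(j)²`, these have
`j ≤ 2d²`. Conversely, every `Φ_j` with `j ≤ 2d²` divides `X ^ (2d²)! - 1`, so the polynomial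
divides `X ^ d * (X ^ (2d²)! - 1)`, and annihilating it gives `M ^ (d + (2d²)!) = M ^ d`.
-/

open Polynomial

namespace Nat

lemma prime_pow_le_gcd_two_mul_totient_sq {p k : ℕ} (hp : p.Prime) (hk : 0 < k) :
    p ^ k ≤ gcd 2 (p ^ k) * φ (p ^ k) ^ 2 := by
  rw [totient_prime_pow hp hk]
  obtain ⟨k, rfl⟩ : ∃ k', k = k' + 1 := ⟨k - 1, by omega⟩
  rcases hp.eq_two_or_odd' with rfl | hodd
  · rw [show gcd 2 (2 ^ (k + 1)) = 2 by simp [pow_succ]]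
    simp only [add_tsub_cancel_right, pow_succ]
    nlinarith [Nat.one_le_two_pow (n := k)]
  · rw [coprime_two_left.2 hodd.pow, one_mul, add_tsub_cancel_right, pow_succ]
    have hp3 : 3 ≤ p := by
      have := hp.two_le
      rcases hodd with ⟨r, rfl⟩
      omega
    have hp_le : p ≤ (p - 1) ^ 2 := by
      obtain ⟨r, rfl⟩ := exists_add_of_le hp3
      simp only [show 3 + r - 1 = r + 2 by omega]
      nlinarith
    have hpow : p ^ k ≤ (p ^ k) ^ 2 := le_self_pow two_ne_zero _
    calc p ^ k * p ≤ (p ^ k) ^ 2 * (p - 1) ^ 2 := mul_le_mul' hpow hp_le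
      _ = (p ^ k * (p - 1)) ^ 2 := by ring

-- With `gcd 2 n` in place of `2` the bound is multiplicative over coprime factors.
lemma le_gcd_two_mul_totient_sq (n : ℕ) : n ≤ gcd 2 n * φ n ^ 2 := by
  induction n using recOnPosPrimePosCoprime with
  | prime_pow p k hp hk => exact prime_pow_le_gcd_two_mul_totient_sq hp hk
  | zero => exact zero_le _
  | one => simp
  | coprime a b _ _ hab ha hb =>
    rw [hab.gcd_mul 2, totient_mul hab]
    calc a * b ≤ (gcd 2 a * φ a ^ 2) * (gcd 2 b * φ b ^ 2) := mul_le_mul' ha hb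
      _ = gcd 2 a * gcd 2 b * (φ a * φ b) ^ 2 := by ring

lemma le_two_mul_totient_sq (n : ℕ) : n ≤ 2 * φ n ^ 2 :=
  (le_gcd_two_mul_totient_sq n).trans <|
    Nat.mul_le_mul_right _ (gcd_le_left n two_pos)

end Nat

lemma Polynomial.dvd_X_pow_of_dvd_X_pow_of_natDegree_le {R : Type*} [CommRing R] [IsDomain R]
    {f : R[X]} {p d : ℕ} (hf : f ∣ X ^ p) (hfd : f.natDegree ≤ d) : f ∣ X ^ d := by
  obtain ⟨i, -, hi⟩ := (dvd_prime_pow prime_X p).1 hf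
  have hid : i ≤ d := by
    simpa [natDegree_eq_of_degree_eq (degree_eq_degree_of_associated hi)] using hfd
  exact hi.dvd.trans (pow_dvd_pow X hid)

lemma Polynomial.isUnit_of_dvd_prod_of_natDegree_lt {K ι : Type*} [Field K] {s : Finset ι}
    {f : ι → K[X]} {g : K[X]} (hirr : ∀ i ∈ s, Irreducible (f i))
    (hdeg : ∀ i ∈ s, g.natDegree < (f i).natDegree) (hg : g ∣ ∏ i ∈ s, f i) : IsUnit g := by
  have hg0 : g ≠ 0 := by
    rintro rfl
    obtain ⟨i, hi, hfi⟩ := Finset.prod_eq_zero_iff.1 (zero_dvd_iff.1 hg)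
    exact (hirr i hi).ne_zero hfi
  by_contra hunit
  obtain ⟨h, hh, hhg⟩ := WfDvdMonoid.exists_irreducible_factor hunit hg0
  obtain ⟨i, hi, hhf⟩ := hh.prime.exists_mem_finset_dvd (hhg.trans hg)
  have hhg_deg := natDegree_le_of_dvd hhg hg0
  have hfh_deg := natDegree_le_of_dvd (hh.associated_of_dvd (hirr i hi) hhf).symm.dvd hh.ne_zero
  exact absurd (hdeg i hi) (by omega)

lemma Polynomial.dvd_prod_cyclotomic_of_dvd_X_pow_sub_one {n d : ℕ} (hn : 0 < n) {g : ℚ[X]}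
    (hg : g ∣ X ^ n - 1) (hgd : g.natDegree ≤ d) :
    g ∣ ∏ j ∈ n.divisors with j.totient ≤ d, cyclotomic j ℚ := by
  have hg0 : g ≠ 0 := ne_zero_of_dvd_ne_zero (by simpa using X_pow_sub_C_ne_zero hn (1 : ℚ)) hg
  rw [← prod_cyclotomic_eq_X_pow_sub_one hn,
    ← Finset.prod_filter_mul_prod_filter_not n.divisors (fun j => j.totient ≤ d)] at hg
  obtain ⟨g₁, g₂, hg₁, hg₂, rfl⟩ := exists_dvd_and_dvd_of_dvd_mul hg
  have hg₂d : g₂.natDegree ≤ d := (natDegree_le_of_dvd (dvd_mul_left g₂ g₁) hg0).trans hgd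
  have hg₂ : IsUnit g₂ := by
    refine isUnit_of_dvd_prod_of_natDegree_lt (fun j hj => ?_) (fun j hj => ?_) hg₂ <;>
      simp only [Finset.mem_filter, not_le] at hj
    · exact cyclotomic.irreducible_rat (Nat.pos_of_mem_divisors hj.1)
    · rw [natDegree_cyclotomic]
      omega
  exact hg₂.mul_right_dvd.2 hg₁

lemma Polynomial.prod_cyclotomic_totient_le_dvd (n d : ℕ) (R : Type*) [CommRing R] :
    ∏ j ∈ n.divisors with j.totient ≤ d, cyclotomic j R ∣
      ∏ j ∈ Finset.Icc 1 (2 * d ^ 2), cyclotomic j R := by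
  refine Finset.prod_dvd_prod_of_subset _ _ _ fun j hj => ?_
  obtain ⟨hjn, hjd⟩ := Finset.mem_filter.1 hj
  have hj2 := Nat.le_two_mul_totient_sq j
  have hjd2 := Nat.pow_le_pow_left hjd 2
  exact Finset.mem_Icc.2 ⟨Nat.pos_of_mem_divisors hjn, by omega⟩

lemma Polynomial.dvd_X_pow_mul_prod_cyclotomic_of_dvd {f : ℚ[X]} {p n d : ℕ} (hn : 0 < n)
    (hf : f ∣ X ^ p * (X ^ n - 1)) (hfd : f.natDegree ≤ d) :
    f ∣ X ^ d * ∏ j ∈ Finset.Icc 1 (2 * d ^ 2), cyclotomic j ℚ := by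
  have hf0 : f ≠ 0 := ne_zero_of_dvd_ne_zero
    (mul_ne_zero (pow_ne_zero _ X_ne_zero) (by simpa using X_pow_sub_C_ne_zero hn (1 : ℚ))) hf
  obtain ⟨A, B, hA, hB, rfl⟩ := exists_dvd_and_dvd_of_dvd_mul hf
  have hAd : A.natDegree ≤ d := (natDegree_le_of_dvd (dvd_mul_right A B) hf0).trans hfd
  have hBd : B.natDegree ≤ d := (natDegree_le_of_dvd (dvd_mul_left B A) hf0).trans hfd
  exact mul_dvd_mul (dvd_X_pow_of_dvd_X_pow_of_natDegree_le hA hAd)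
    ((dvd_prod_cyclotomic_of_dvd_X_pow_sub_one hn hB hBd).trans
      (prod_cyclotomic_totient_le_dvd n d ℚ))

lemma Polynomial.prod_cyclotomic_Icc_dvd_X_pow_factorial_sub_one (N : ℕ) (R : Type*)
    [CommRing R] : ∏ j ∈ Finset.Icc 1 N, cyclotomic j R ∣ X ^ N.factorial - 1 := by
  rw [← prod_cyclotomic_eq_X_pow_sub_one (Nat.factorial_pos N)]
  refine Finset.prod_dvd_prod_of_subset _ _ _ fun j hj => ?_
  obtain ⟨hj1, hjN⟩ := Finset.mem_Icc.1 hj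
  exact Nat.mem_divisors.2 ⟨Nat.dvd_factorial hj1 hjN, (Nat.factorial_pos N).ne'⟩

lemma Polynomial.aeval_X_pow_mul_X_pow_sub_one_eq_zero_iff {R A : Type*} [CommRing R] [Ring A]
    [Algebra R A] {a : A} {p n : ℕ} :
    aeval a (X ^ p * (X ^ n - 1) : R[X]) = 0 ↔ a ^ (p + n) = a ^ p := by
  simp [mul_sub, pow_add, sub_eq_zero]

lemma Matrix.natDegree_minpoly_le {K n : Type*} [Field K] [Fintype n] [DecidableEq n]
    (M : Matrix n n K) : (minpoly K M).natDegree ≤ Fintype.card n := by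
  simpa using natDegree_le_of_dvd M.minpoly_dvd_charpoly M.charpoly_monic.ne_zero

theorem torsion_iff_annihilates_explicit_general (d : ℕ)
    (M : Matrix (Fin d) (Fin d) ℚ) :
    (∃ p q : ℕ, p ≠ q ∧ M ^ p = M ^ q) ↔
      Polynomial.aeval M
        (Polynomial.X ^ d *
          ∏ j ∈ Finset.Icc 1 (2 * d ^ 2), Polynomial.cyclotomic j ℚ) = 0 := by
  constructor
  · rintro ⟨p, q, hpq, hM⟩
    wlog hlt : p < q generalizing p q
    · exact this q p hpq.symm hM.symm (by omega)
    have hμ : minpoly ℚ M ∣ X ^ p * (X ^ (q - p) - 1) :=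
      minpoly.dvd ℚ M <| aeval_X_pow_mul_X_pow_sub_one_eq_zero_iff.2 <| by
        rw [Nat.add_sub_cancel' hlt.le, hM]
    have hμd : (minpoly ℚ M).natDegree ≤ d := by simpa using M.natDegree_minpoly_le
    exact aeval_eq_zero_of_dvd_aeval_eq_zero
      (dvd_X_pow_mul_prod_cyclotomic_of_dvd (Nat.sub_pos_of_lt hlt) hμ hμd) (minpoly.aeval ℚ M)
  · intro hann
    refine ⟨d + (2 * d ^ 2).factorial, d, (Nat.lt_add_of_pos_right (Nat.factorial_pos _)).ne', ?_⟩
    exact aeval_X_pow_mul_X_pow_sub_one_eq_zero_iff.1 <| aeval_eq_zero_of_dvd_aeval_eq_zero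
      (mul_dvd_mul_left _ (prod_cyclotomic_Icc_dvd_X_pow_factorial_sub_one _ ℚ)) hann

theorem torsion_iff_annihilates_explicit (d : ℕ) (hd : 0 < d)
    (M : Matrix (Fin d) (Fin d) ℚ) :
    (∃ p q : ℕ, p ≠ q ∧ M ^ p = M ^ q) ↔
      Polynomial.aeval M
        (Polynomial.X ^ d *
          ∏ j ∈ Finset.Icc 1 (2 * d ^ 2), Polynomial.cyclotomic j ℚ) = 0 :=
  torsion_iff_annihilates_explicit_general d M
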